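/- The degree-12 discriminant curve Δ = 4p₄³ − 27p₆² = 0 is projectively equivalent to the dual curve of the Klein quartic: there exists an invertible 3×3 complex matrix M such that substituting into Δ the three coordinates of M·(∂f/∂z₀, ∂f/∂z₁, ∂f/∂z₂) yields a polynomial in ℂ[z₀,z₁,z₂] lying in the ideal generated by f; i.e. Δ(M·∇f) = h·f for some polynomial h ∈ ℂ[z₀,z₁,z₂]. -/

import Mathlib

open MvPolynomial

/-!
Along the Klein quartic the cubic `p₆ + p₄T − T³`, pulled back by the Gauss map (with two
dual coordinates swapped), acquires a double root, namely `τ = −Hess(f)/54`: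
`p₄ ≡ 3τ²` and `p₆ ≡ −2τ³` modulo `f`, and any cubic `−T³ + aT + b` with `a = 3τ²`,
`b = −2τ³` has discriminant `4a³ − 27b² = 0`.
-/

/-- `p₄ = x₀³x₁ + x₀x₂³ + x₁³x₂`. -/
noncomputable def p4 : MvPolynomial (Fin 3) ℂ :=
  X 0 ^ 3 * X 1 + X 0 * X 2 ^ 3 + X 1 ^ 3 * X 2

/-- `p₆ = x₀⁵x₂ + x₀x₁⁵ + x₁x₂⁵ − 5x₀²x₁²x₂²`. -/
noncomputable def p6 : MvPolynomial (Fin 3) ℂ :=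
  X 0 ^ 5 * X 2 + X 0 * X 1 ^ 5 + X 1 * X 2 ^ 5 - 5 * X 0 ^ 2 * X 1 ^ 2 * X 2 ^ 2

/-- The discriminant `Δ = 4p₄³ − 27p₆²` of the cubic `p₆ + p₄T − T³`. -/
noncomputable def Δ : MvPolynomial (Fin 3) ℂ := 4 * p4 ^ 3 - 27 * p6 ^ 2

/-- The Klein quartic `f = z₀z₁³ + z₁z₂³ + z₂z₀³`. -/
noncomputable def f : MvPolynomial (Fin 3) ℂ :=
  X 0 * X 1 ^ 3 + X 1 * X 2 ^ 3 + X 2 * X 0 ^ 3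

theorem dvd_cubic_disc_of_double_root {R : Type*} [CommRing R] {d a b t : R}
    (ha : d ∣ a - 3 * t ^ 2) (hb : d ∣ b + 2 * t ^ 3) : d ∣ 4 * a ^ 3 - 27 * b ^ 2 := by
  obtain ⟨A, rfl⟩ : ∃ A, a = 3 * t ^ 2 + d * A := ha.imp fun A hA => by linear_combination hA
  obtain ⟨B, rfl⟩ : ∃ B, b = -2 * t ^ 3 + d * B := hb.imp fun B hB => by linear_combination hB
  exact ⟨108 * t ^ 4 * A + 36 * t ^ 2 * d * A ^ 2 + 4 * d ^ 2 * A ^ 3 + 108 * t ^ 3 * B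
    - 27 * d * B ^ 2, by ring⟩

theorem Matrix.isUnit_permMatrix {n R : Type*} [Fintype n] [DecidableEq n] [CommRing R]
    (σ : Equiv.Perm n) : IsUnit (σ.permMatrix R) := by
  rw [Matrix.isUnit_iff_isUnit_det, Matrix.det_permutation]
  exact σ.sign.isUnit.map (Int.castRingHom R)

theorem MvPolynomial.sum_C_permMatrix_mul {n σ R : Type*} [Fintype n] [DecidableEq n]
    [CommSemiring R] (π : Equiv.Perm n) (p : n → MvPolynomial σ R) (i : n) :
    ∑ j, C (π.permMatrix R i j) * p j = p (π i) := by
  simp [PEquiv.toMatrix_apply, apply_ite C]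

noncomputable def kleinGauss : Fin 3 → MvPolynomial (Fin 3) ℂ :=
  fun i => pderiv (Equiv.swap 1 2 i) f

/-- `τ = −Hess(f)/54`, which is `p₆` with `x₁` and `x₂` swapped. -/
noncomputable def kleinSextic : MvPolynomial (Fin 3) ℂ :=
  X 0 ^ 5 * X 1 + X 0 * X 2 ^ 5 + X 1 ^ 5 * X 2 - 5 * X 0 ^ 2 * X 1 ^ 2 * X 2 ^ 2

theorem kleinGauss_eq : kleinGauss =
    ![3 * X 0 ^ 2 * X 2 + X 1 ^ 3, X 0 ^ 3 + 3 * X 1 * X 2 ^ 2, 3 * X 0 * X 1 ^ 2 + X 2 ^ 3] := by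
  funext i
  fin_cases i <;> simp [kleinGauss, f, pderiv_X, Equiv.swap_apply_def] <;> ring

theorem aeval_kleinGauss_p4 : aeval kleinGauss p4 = 3 * kleinSextic ^ 2 + 28 * f ^ 3 := by
  simp only [kleinGauss_eq, p4, kleinSextic, f, map_add, map_mul, map_pow, aeval_X,
    Matrix.cons_val_zero, Matrix.cons_val_one, Matrix.cons_val_two, Matrix.tail_cons,
    Matrix.head_cons]
  ring

theorem f_dvd_aeval_kleinGauss_p6 : f ∣ aeval kleinGauss p6 + 2 * kleinSextic ^ 3 := by
  refine ⟨3 * X 0 ^ 14 + 42 * X 0 ^ 11 * X 1 * X 2 ^ 2 - 462 * X 0 ^ 9 * X 1 ^ 4 * X 2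
      + 693 * X 0 ^ 8 * X 1 ^ 2 * X 2 ^ 4 + 198 * X 0 ^ 7 * X 1 ^ 7 + 198 * X 0 ^ 7 * X 2 ^ 7
      - 1386 * X 0 ^ 6 * X 1 ^ 5 * X 2 ^ 3 - 1386 * X 0 ^ 5 * X 1 ^ 3 * X 2 ^ 6
      + 693 * X 0 ^ 4 * X 1 ^ 8 * X 2 ^ 2 - 462 * X 0 ^ 4 * X 1 * X 2 ^ 9
      - 1386 * X 0 ^ 3 * X 1 ^ 6 * X 2 ^ 5 + 42 * X 0 ^ 2 * X 1 ^ 11 * X 2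
      + 693 * X 0 ^ 2 * X 1 ^ 4 * X 2 ^ 8 - 462 * X 0 * X 1 ^ 9 * X 2 ^ 4
      + 42 * X 0 * X 1 ^ 2 * X 2 ^ 11 + 3 * X 1 ^ 14 + 198 * X 1 ^ 7 * X 2 ^ 7 + 3 * X 2 ^ 14, ?_⟩
  simp only [kleinGauss_eq, p6, kleinSextic, f, map_add, map_sub, map_mul, map_pow, map_ofNat,
    aeval_X, Matrix.cons_val_zero, Matrix.cons_val_one, Matrix.cons_val_two, Matrix.tail_cons,
    Matrix.head_cons]
  ring

theorem f_dvd_aeval_kleinGauss_Δ : f ∣ aeval kleinGauss Δ := by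
  have hp4 : f ∣ aeval kleinGauss p4 - 3 * kleinSextic ^ 2 :=
    ⟨28 * f ^ 2, by rw [aeval_kleinGauss_p4]; ring⟩
  simpa only [Δ, map_sub, map_mul, map_pow, map_ofNat] using
    dvd_cubic_disc_of_double_root hp4 f_dvd_aeval_kleinGauss_p6

/-- The discriminant curve `Δ = 0` is projectively equivalent to the dual curve
of the Klein quartic: for some invertible matrix `M`, the pullback `Δ(M·∇f)` of
`Δ` along `M` composed with the Gauss map of `f` lies in the ideal `(f)`. -/
theorem discriminant_is_dual_of_Klein :
    ∃ M : Matrix (Fin 3) (Fin 3) ℂ, IsUnit M ∧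
      ∃ h : MvPolynomial (Fin 3) ℂ,
        aeval (fun i : Fin 3 => ∑ j : Fin 3, C (M i j) * pderiv j f) Δ = h * f := by
  refine ⟨(Equiv.swap 1 2).permMatrix ℂ, Matrix.isUnit_permMatrix _, ?_⟩
  obtain ⟨h, hh⟩ := f_dvd_aeval_kleinGauss_Δ
  refine ⟨h, ?_⟩
  simp only [MvPolynomial.sum_C_permMatrix_mul]
  exact hh.trans (mul_comm f h)
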